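/- For the BSSC with parameters α, β ∈ (0,1), α+β ≠ 1, the function f(κ) = H(ακ + (1-κ)(1-β)) - κH(α) - (1-κ)H(β) on (0,1) is concave, and its unique maximizer is κ* = ν = (1-(1-β)(1+2^μ))/((α+β-1)(1+2^μ)) with μ = (H(β)-H(α))/(1-α-β), at which f(ν) = H(λ) - νH(α) - (1-ν)H(β) with λ = 1/(1+2^μ). -/

import Mathlib

/-!
Put `λ = 1/(1+2^μ)`. Then `H'(λ) = log₂((1-λ)/λ) = μ`, and `μ` is the slope of the chord of `H`
between `1-β` and `α` (using `H(1-β) = H(β)`). Since `H'` is strictly decreasing, `λ` lies strictly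
between `1-β` and `α`; as `ν` is the parameter with `αν + (1-ν)(1-β) = λ`, this gives `ν ∈ (0,1)`.
The function `f` is `H` composed with an affine map, minus an affine map, hence concave, and the
strict tangent-line inequality for `H` at `λ` gives `f(κ) < f(ν)` for every `κ ≠ ν`.
-/

/-- Binary entropy function (base 2), extended by `H 0 = H 1 = 0`. -/
noncomputable def binH (p : ℝ) : ℝ := -p * Real.logb 2 p - (1 - p) * Real.logb 2 (1 - p)

open Real Set AffineMap

theorem StrictConcaveOn.div_const {E : Type*} [AddCommMonoid E] [SMul ℝ E] {s : Set E}
    {f : E → ℝ} (hf : StrictConcaveOn ℝ s f) {c : ℝ} (hc : 0 < c) :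
    StrictConcaveOn ℝ s fun x => f x / c := by
  refine ⟨hf.1, fun x hx y hy hxy a b ha hb hab => ?_⟩
  simp only [smul_eq_mul]
  calc a * (f x / c) + b * (f y / c) = (a * f x + b * f y) / c := by ring
    _ < f (a • x + b • y) / c := div_lt_div_of_pos_right (hf.2 hx hy hxy ha hb hab) hc

theorem AffineMap.convexOn {𝕜 E F : Type*} [Ring 𝕜] [PartialOrder 𝕜] [AddCommGroup E]
    [Module 𝕜 E] [AddCommGroup F] [PartialOrder F] [Module 𝕜 F] (f : E →ᵃ[𝕜] F) {s : Set E}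
    (hs : Convex 𝕜 s) : ConvexOn 𝕜 s f :=
  ⟨hs, fun _ _ _ _ _ _ _ _ hab => (Convex.combo_affine_apply hab).le⟩

namespace StrictConcaveOn

variable {S : Set ℝ} {f : ℝ → ℝ} {a b c x y f' : ℝ}

theorem lt_add_mul_sub_of_hasDerivAt (hf : StrictConcaveOn ℝ S f) (hx : x ∈ S) (hy : y ∈ S)
    (hyx : y ≠ x) (hfx : HasDerivAt f f' x) : f y < f x + f' * (y - x) := by
  rcases hyx.lt_or_gt with h | h
  · have := hf.lt_slope_of_hasDerivAt hy hx h hfx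
    rw [slope_def_field, lt_div_iff₀ (sub_pos.2 h)] at this
    linarith
  · have := hf.slope_lt_of_hasDerivAt hx hy h hfx
    rw [slope_def_field, div_lt_iff₀ (sub_pos.2 h)] at this
    linarith

theorem mem_Ioo_of_hasDerivAt_slope (hf : StrictConcaveOn ℝ S f)
    (hfd : ∀ x ∈ S, DifferentiableAt ℝ f x) (ha : a ∈ S) (hb : b ∈ S) (hc : c ∈ S) (hab : a < b)
    (hfc : HasDerivAt f (slope f a b) c) : c ∈ Ioo a b := by
  have hanti := hf.strictAntiOn_deriv hfd
  have hc' : deriv f c = slope f a b := hfc.deriv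
  constructor
  · by_contra! hca
    linarith [hanti.antitoneOn hc ha hca, hf.slope_lt_deriv ha hb hab (hfd a ha)]
  · by_contra! hbc
    linarith [hanti.antitoneOn hb hc hbc, hf.deriv_lt_slope ha hb hab (hfd b hb)]

theorem mem_uIoo_of_hasDerivAt_slope (hf : StrictConcaveOn ℝ S f)
    (hfd : ∀ x ∈ S, DifferentiableAt ℝ f x) (ha : a ∈ S) (hb : b ∈ S) (hc : c ∈ S) (hab : a ≠ b)
    (hfc : HasDerivAt f (slope f a b) c) : c ∈ uIoo a b := by
  rcases hab.lt_or_gt with h | h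
  · rw [uIoo_of_lt h]
    exact hf.mem_Ioo_of_hasDerivAt_slope hfd ha hb hc h hfc
  · rw [uIoo_of_gt h]
    exact hf.mem_Ioo_of_hasDerivAt_slope hfd hb ha hc h (slope_comm f a b ▸ hfc)

end StrictConcaveOn

theorem sub_div_sub_mem_Ioo_of_mem_uIoo {K : Type*} [Field K] [LinearOrder K]
    [IsStrictOrderedRing K] {a b x : K} (hx : x ∈ uIoo a b) : (x - a) / (b - a) ∈ Ioo 0 1 := by
  rcases lt_or_ge a b with h | h
  · rw [uIoo_of_lt h] at hx
    exact ⟨div_pos (sub_pos.2 hx.1) (sub_pos.2 h), (div_lt_one (sub_pos.2 h)).2 (by linarith [hx.2])⟩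
  · rw [uIoo_of_ge h] at hx
    exact ⟨div_pos_of_neg_of_neg (by linarith [hx.2]) (by linarith [hx.1, hx.2]),
      (div_lt_one_of_neg (by linarith [hx.1, hx.2])).2 (by linarith [hx.1])⟩

theorem mul_add_one_sub_mul_mem_Icc {a b t : ℝ} (ha : a ∈ Icc 0 1) (hb : b ∈ Icc 0 1)
    (ht : t ∈ Icc 0 1) : a * t + (1 - t) * b ∈ Icc 0 1 := by
  simpa [lineMap_apply_ring, mul_comm, add_comm] using (convex_Icc (0 : ℝ) 1).lineMap_mem hb ha ht

theorem one_div_one_add_mem_Ioo {x : ℝ} (hx : 0 < x) : 1 / (1 + x) ∈ Ioo 0 1 :=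
  ⟨by positivity, (div_lt_one (by positivity)).2 (by linarith)⟩

theorem binH_eq_binEntropy_div : binH = fun p => binEntropy p / log 2 := by
  funext p
  simp only [binH, binEntropy, logb, log_inv]
  ring

theorem binH_one_sub (p : ℝ) : binH (1 - p) = binH p := by
  simp [binH_eq_binEntropy_div]

theorem strictConcaveOn_binH : StrictConcaveOn ℝ (Icc 0 1) binH := by
  rw [binH_eq_binEntropy_div]
  exact strictConcave_binEntropy.div_const (log_pos one_lt_two)

theorem hasDerivAt_binH {p : ℝ} (hp₀ : p ≠ 0) (hp₁ : p ≠ 1) :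
    HasDerivAt binH (logb 2 ((1 - p) / p)) p := by
  rw [binH_eq_binEntropy_div, logb, log_div (sub_ne_zero.2 hp₁.symm) hp₀]
  exact (hasDerivAt_binEntropy hp₀ hp₁).div_const _

theorem hasDerivAt_binH_one_div_one_add_rpow (μ : ℝ) : HasDerivAt binH μ (1 / (1 + 2 ^ μ)) := by
  have h2μ : 0 < (2 : ℝ) ^ μ := rpow_pos_of_pos two_pos μ
  have hratio : (1 - 1 / (1 + 2 ^ μ)) / (1 / (1 + 2 ^ μ)) = (2 : ℝ) ^ μ := by
    field_simp
    ring
  obtain ⟨hp₀, hp₁⟩ := one_div_one_add_mem_Ioo h2μ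
  convert hasDerivAt_binH hp₀.ne' hp₁.ne using 1
  rw [hratio, logb_rpow two_pos (by norm_num)]

theorem one_div_one_add_rpow_slope_binH_mem_uIoo {a b : ℝ} (ha : a ∈ Ioo 0 1) (hb : b ∈ Ioo 0 1)
    (hab : a ≠ b) : 1 / (1 + 2 ^ slope binH a b) ∈ uIoo a b :=
  (strictConcaveOn_binH.subset Ioo_subset_Icc_self (convex_Ioo 0 1)).mem_uIoo_of_hasDerivAt_slope
    (fun _ hp => (hasDerivAt_binH hp.1.ne' hp.2.ne).differentiableAt) ha hb
    (one_div_one_add_mem_Ioo (rpow_pos_of_pos two_pos _)) hab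
    (hasDerivAt_binH_one_div_one_add_rpow _)

noncomputable def bsscInfo (α β κ : ℝ) : ℝ :=
  binH (α * κ + (1 - κ) * (1 - β)) - κ * binH α - (1 - κ) * binH β

section bsscInfo

variable {α β : ℝ}

theorem concaveOn_bsscInfo (hα : α ∈ Icc 0 1) (hβ : β ∈ Icc 0 1) :
    ConcaveOn ℝ (Icc 0 1) (bsscInfo α β) := by
  set G : ℝ →ᵃ[ℝ] ℝ := lineMap (1 - β) α
  set A : ℝ →ᵃ[ℝ] ℝ := lineMap (binH β) (binH α)
  have hG : ∀ κ, G κ = α * κ + (1 - κ) * (1 - β) := fun κ => by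
    rw [lineMap_apply_ring]
    ring
  have hcomp := (strictConcaveOn_binH.concaveOn.comp_affineMap G).subset
    (fun κ hκ => by
      rw [mem_preimage, hG]
      exact mul_add_one_sub_mul_mem_Icc hα ⟨sub_nonneg.2 hβ.2, sub_le_self _ hβ.1⟩ hκ)
    (convex_Icc 0 1)
  have hf : bsscInfo α β = binH ∘ G - A := by
    funext κ
    simp only [bsscInfo, Function.comp_apply, Pi.sub_apply, hG, A, lineMap_apply_ring]
    ring
  rw [hf]
  exact hcomp.sub (A.convexOn (convex_Icc 0 1))

theorem bsscInfo_lt_of_hasDerivAt_slope {κ ν : ℝ} (hα : α ∈ Icc 0 1) (hβ : β ∈ Icc 0 1)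
    (hab : α + β ≠ 1) (hκ : κ ∈ Icc 0 1) (hν : ν ∈ Icc 0 1) (hκν : κ ≠ ν)
    (hderiv : HasDerivAt binH (slope binH (1 - β) α) (α * ν + (1 - ν) * (1 - β))) :
    bsscInfo α β κ < bsscInfo α β ν := by
  have hd : α - (1 - β) ≠ 0 := by contrapose! hab; linarith
  have h1β : 1 - β ∈ Icc (0 : ℝ) 1 := ⟨sub_nonneg.2 hβ.2, sub_le_self _ hβ.1⟩
  have hdiff : α * κ + (1 - κ) * (1 - β) - (α * ν + (1 - ν) * (1 - β)) =
      (κ - ν) * (α - (1 - β)) := by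
    ring
  have htan := strictConcaveOn_binH.lt_add_mul_sub_of_hasDerivAt
    (mul_add_one_sub_mul_mem_Icc hα h1β hν) (mul_add_one_sub_mul_mem_Icc hα h1β hκ)
    (by rw [Ne, ← sub_eq_zero, hdiff]; exact mul_ne_zero (sub_ne_zero.2 hκν) hd) hderiv
  have hslope : slope binH (1 - β) α * ((κ - ν) * (α - (1 - β))) =
      (κ - ν) * (binH α - binH β) := by
    rw [slope_def_field, binH_one_sub]
    field_simp
  rw [hdiff, hslope] at htan
  unfold bsscInfo
  linarith

end bsscInfo

/-- The single-letter mutual information `f(κ) = H(ακ+(1-κ)(1-β)) - κH(α) - (1-κ)H(β)` of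
the BSSC is concave on `(0,1)`, its unique maximizer on `(0,1)` is `ν`, and
`f(ν) = H(λ) - νH(α) - (1-ν)H(β)`. -/
theorem bssc_single_letter_concave_maximizer (α β : ℝ)
    (hα : α ∈ Set.Ioo (0 : ℝ) 1) (hβ : β ∈ Set.Ioo (0 : ℝ) 1) (hab : α + β ≠ 1)
    (μ lam ν : ℝ) (hμ : μ = (binH β - binH α) / (1 - α - β))
    (hlam : lam = 1 / (1 + (2 : ℝ) ^ μ))
    (hν : ν = (1 - (1 - β) * (1 + (2 : ℝ) ^ μ)) / ((α + β - 1) * (1 + (2 : ℝ) ^ μ))) :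
    ConcaveOn ℝ (Set.Ioo (0 : ℝ) 1)
        (fun κ => binH (α * κ + (1 - κ) * (1 - β)) - κ * binH α - (1 - κ) * binH β) ∧
    ν ∈ Set.Ioo (0 : ℝ) 1 ∧
    (∀ κ ∈ Set.Ioo (0 : ℝ) 1,
      binH (α * κ + (1 - κ) * (1 - β)) - κ * binH α - (1 - κ) * binH β ≤
        binH (α * ν + (1 - ν) * (1 - β)) - ν * binH α - (1 - ν) * binH β) ∧
    (∀ κ ∈ Set.Ioo (0 : ℝ) 1,
      binH (α * κ + (1 - κ) * (1 - β)) - κ * binH α - (1 - κ) * binH β =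
        binH (α * ν + (1 - ν) * (1 - β)) - ν * binH α - (1 - ν) * binH β → κ = ν) ∧
    binH (α * ν + (1 - ν) * (1 - β)) - ν * binH α - (1 - ν) * binH β =
      binH lam - ν * binH α - (1 - ν) * binH β := by
  have h1β : 1 - β ∈ Ioo (0 : ℝ) 1 := ⟨by linarith [hβ.2], by linarith [hβ.1]⟩
  have hslope : slope binH (1 - β) α = μ := by
    rw [slope_def_field, binH_one_sub, hμ, ← neg_div_neg_eq]
    congr 1 <;> ring
  have hd : α - (1 - β) ≠ 0 := by contrapose! hab; linarith
  have hlam_btw : lam ∈ uIoo (1 - β) α := hlam ▸ hslope ▸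
    one_div_one_add_rpow_slope_binH_mem_uIoo h1β hα (sub_ne_zero.1 hd).symm
  have hν' : ν = (lam - (1 - β)) / (α - (1 - β)) := by
    rw [hν, hlam]
    field_simp
    ring
  have hν_mem : ν ∈ Ioo (0 : ℝ) 1 := hν' ▸ sub_div_sub_mem_Ioo_of_mem_uIoo hlam_btw
  have hlam_eq : α * ν + (1 - ν) * (1 - β) = lam := by
    rw [hν']
    field_simp
    ring
  have hmax : ∀ κ ∈ Ioo (0 : ℝ) 1, κ ≠ ν → bsscInfo α β κ < bsscInfo α β ν := fun κ hκ hκν =>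
    bsscInfo_lt_of_hasDerivAt_slope (Ioo_subset_Icc_self hα) (Ioo_subset_Icc_self hβ) hab
      (Ioo_subset_Icc_self hκ) (Ioo_subset_Icc_self hν_mem) hκν
      (by rw [hlam_eq, hslope, hlam]; exact hasDerivAt_binH_one_div_one_add_rpow μ)
  refine ⟨(concaveOn_bsscInfo (Ioo_subset_Icc_self hα) (Ioo_subset_Icc_self hβ)).subset
      Ioo_subset_Icc_self (convex_Ioo 0 1), hν_mem, fun κ hκ => ?_, fun κ hκ heq => ?_,
      by rw [hlam_eq]⟩
  · rcases eq_or_ne κ ν with rfl | hκν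
    exacts [le_rfl, (hmax κ hκ hκν).le]
  · by_contra hκν
    exact (hmax κ hκ hκν).ne heq
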